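/- arXiv:2302.09890 — 2 statements merged into one kernel-verified Lean document; each statement's English description precedes it below -/
import Mathlib

section
/- Suppose ν is an f-invariant Borel probability measure on I with ν absolutely continuous with respect to m, and suppose that for m-almost every x ∈ I there exist an open set V ⊆ ℝ containing x and an integer N ≥ 0 such that f^N(V ∩ I) ⊆ Δ*. Then ν(Δ*) > 0. -/
open MeasureTheory Set Function

noncomputable section

/-- Lebesgue measure restricted to `I = [a,b]`. -/
def mI (a b : ℝ) : Measure ℝ := volume.restrict (Icc a b)

/-- `ν` is `f`-invariant (for `f : I → I`): `ν(f⁻¹(A)) = ν(A)` for every Borel `A ⊆ I`. -/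
def InvariantOn (f : ℝ → ℝ) (a b : ℝ) (ν : Measure ℝ) : Prop :=
  ∀ A : Set ℝ, A ⊆ Icc a b → MeasurableSet A → ν (f ⁻¹' A ∩ Icc a b) = ν A

/-- if `ν` is an `f`-invariant Borel probability measure on `I`, absolutely
continuous w.r.t. `m`, and `m`-a.e. point has a neighbourhood which enters `Δ*` under
some iterate of `f`, then `ν(Δ*) > 0`. -/
theorem stmt1 (a b : ℝ) (hab : a < b)
    (f : ℝ → ℝ) (hmeas : Measurable f) (hmaps : MapsTo f (Icc a b) (Icc a b))
    (Δstar : Set ℝ) (hΔmeas : MeasurableSet Δstar) (hΔsub : Δstar ⊆ Icc a b)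
    (ν : Measure ℝ) (hprob : IsProbabilityMeasure ν) (hconc : ν (Icc a b)ᶜ = 0)
    (hinv : InvariantOn f a b ν) (habs : ν ≪ mI a b)
    (hret : ∀ᵐ x ∂(mI a b), ∃ V : Set ℝ, IsOpen V ∧ x ∈ V ∧
      ∃ N : ℕ, f^[N] '' (V ∩ Icc a b) ⊆ Δstar) :
    0 < ν Δstar := by
  by_contra h
  push_neg at h
  have hν0 : ν Δstar = 0 := le_antisymm h zero_le
  set S : ℕ → Set ℝ := fun N => f^[N] ⁻¹' Δstar ∩ Icc a b with hS
  have hSmeas : ∀ N, MeasurableSet (S N) := fun N =>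
    ((hmeas.iterate N) hΔmeas).inter measurableSet_Icc
  have hSν : ∀ N, ν (S N) = ν Δstar := by
    intro N
    induction N with
    | zero => simp [hS, Set.inter_eq_left.mpr hΔsub]
    | succ N ih =>
      have key : S (N + 1) = f ⁻¹' (S N) ∩ Icc a b := by
        ext x
        simp only [hS, Function.iterate_succ, Set.mem_inter_iff, Set.mem_preimage,
          Function.comp_apply]
        constructor
        · rintro ⟨h1, h2⟩; exact ⟨⟨h1, hmaps h2⟩, h2⟩
        · rintro ⟨⟨h1, _⟩, h2⟩; exact ⟨h1, h2⟩
      rw [key, hinv _ Set.inter_subset_right (hSmeas N), ih]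
  have hUν : ν (⋃ N, S N) = 0 :=
    measure_iUnion_null fun N => by rw [hSν N, hν0]
  have hmem : ∀ᵐ x ∂(mI a b), x ∈ ⋃ N, S N := by
    have hIm : ∀ᵐ x ∂(mI a b), x ∈ Icc a b :=
      MeasureTheory.ae_restrict_mem measurableSet_Icc
    filter_upwards [hret, hIm] with x hx hxI
    obtain ⟨V, hVopen, hxV, N, hN⟩ := hx
    exact Set.mem_iUnion.mpr ⟨N, ⟨hN ⟨x, ⟨hxV, hxI⟩, rfl⟩, hxI⟩⟩
  have hmcomp : mI a b ((⋃ N, S N)ᶜ) = 0 := by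
    rw [MeasureTheory.ae_iff] at hmem
    simpa [Set.compl_def] using hmem
  have hνcomp : ν ((⋃ N, S N)ᶜ) = 0 := habs hmcomp
  have : (1 : ENNReal) ≤ 0 := by
    calc (1 : ENNReal) = ν Set.univ := (measure_univ).symm
    _ = ν ((⋃ N, S N) ∪ (⋃ N, S N)ᶜ) := by rw [Set.union_compl_self]
    _ ≤ ν (⋃ N, S N) + ν ((⋃ N, S N)ᶜ) := measure_union_le _ _
    _ = 0 := by rw [hUν, hνcomp, add_zero]
  exact absurd this (by norm_num)
end
end

section
/- log|(f^k)'(x)| − log|(f^k)'(y)| ≤ Σ_{j=0}^{k−1} (sup_{t ∈ J_j} |f''(t)|) · |x_j − y_j| / |f'(y_j)|, where (f^k)' denotes the derivative of the k-th iterate of f (so that (f^k)'(x) = Π_{j=0}^{k−1} f'(x_j)). -/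
open Set Function

noncomputable section

/-- The "derivative of the `k`-th iterate", given by the chain-rule product
`(f^k)'(x) = ∏_{j=0}^{k−1} f'(x_j)` along the orbit. -/
def iterDeriv (f : ℝ → ℝ) (k : ℕ) (x : ℝ) : ℝ :=
  ∏ j ∈ Finset.range k, deriv f (f^[j] x)

lemma auxstep (f : ℝ → ℝ) (a b : ℝ) (U : Set ℝ) (hU : IsOpen U) (hsub : uIcc a b ⊆ U)
    (hf : ContDiffOn ℝ 2 f U) (hne : ∀ t ∈ uIcc a b, deriv f t ≠ 0) :
    Real.log |deriv f a| - Real.log |deriv f b| ≤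
      (⨆ t ∈ uIcc a b, |deriv (deriv f) t|) * |a - b| / |deriv f b| := by
  set C : ℝ := ⨆ t ∈ uIcc a b, |deriv (deriv f) t| with hC
  have hf1 : ContDiffOn ℝ 1 (deriv f) U := by
    have := hf.deriv_of_isOpen hU (m := 1) (by norm_num)
    simpa using this
  have hd : ∀ t ∈ U, HasDerivAt (deriv f) (deriv (deriv f) t) t := fun t ht =>
    ((hf1.differentiableOn one_ne_zero t ht).differentiableAt (hU.mem_nhds ht)).hasDerivAt
  have hc : ContinuousOn (fun t => |deriv (deriv f) t|) (uIcc a b) :=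
    ((hf1.continuousOn_deriv_of_isOpen hU le_rfl).mono hsub).abs
  obtain ⟨M, hM⟩ := (isCompact_uIcc.image_of_continuousOn hc).bddAbove
  have hbdd : BddAbove (Set.range fun t => ⨆ _ : t ∈ uIcc a b, |deriv (deriv f) t|) := by
    refine ⟨max M 0, ?_⟩
    rintro _ ⟨t, rfl⟩
    by_cases ht : t ∈ uIcc a b
    · have : (⨆ _ : t ∈ uIcc a b, |deriv (deriv f) t|) = |deriv (deriv f) t| :=
        ciSup_pos (f := fun _ : t ∈ uIcc a b => |deriv (deriv f) t|) ht
      show (⨆ _ : t ∈ uIcc a b, |deriv (deriv f) t|) ≤ max M 0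
      rw [this]
      exact le_max_of_le_left (hM ⟨t, ht, rfl⟩)
    · have : IsEmpty (t ∈ uIcc a b) := ⟨ht⟩
      simp [Real.iSup_of_isEmpty]
  have hle : ∀ t ∈ uIcc a b, ‖deriv (deriv f) t‖ ≤ C := by
    intro t ht
    rw [Real.norm_eq_abs]
    calc |deriv (deriv f) t| = ⨆ _ : t ∈ uIcc a b, |deriv (deriv f) t| :=
        (ciSup_pos (f := fun _ : t ∈ uIcc a b => |deriv (deriv f) t|) ht).symm
      _ ≤ C := le_ciSup hbdd t
  have hmvt : ‖deriv f a - deriv f b‖ ≤ C * ‖a - b‖ :=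
    (convex_uIcc a b).norm_image_sub_le_of_norm_hasDerivWithin_le
      (fun t ht => (hd t (hsub ht)).hasDerivWithinAt) hle right_mem_uIcc left_mem_uIcc
  have ha : deriv f a ≠ 0 := hne a left_mem_uIcc
  have hb : deriv f b ≠ 0 := hne b right_mem_uIcc
  have hbpos : (0:ℝ) < |deriv f b| := abs_pos.mpr hb
  have hapos : (0:ℝ) < |deriv f a| := abs_pos.mpr ha
  calc Real.log |deriv f a| - Real.log |deriv f b|
      = Real.log (|deriv f a| / |deriv f b|) := (Real.log_div hapos.ne' hbpos.ne').symm
    _ ≤ |deriv f a| / |deriv f b| - 1 := Real.log_le_sub_one_of_pos (by positivity)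
    _ = (|deriv f a| - |deriv f b|) / |deriv f b| := by field_simp
    _ ≤ |deriv f a - deriv f b| / |deriv f b| := by
        gcongr
        exact abs_sub_abs_le_abs_sub _ _
    _ ≤ C * |a - b| / |deriv f b| := by
        gcongr
        simpa [Real.norm_eq_abs] using hmvt

/-- the basic distortion estimate
`log|(f^k)'(x)| − log|(f^k)'(y)| ≤ Σ_j sup_{J_j}|f''| · |x_j − y_j| / |f'(y_j)|`,
where `x_j = f^j(x)`, `y_j = f^j(y)` and `J_j = [min(x_j,y_j), max(x_j,y_j)]`. -/
theorem stmt7 (f : ℝ → ℝ) (k : ℕ) (hk : 1 ≤ k) (x y : ℝ)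
    (hsm : ∀ j < k, ∃ U : Set ℝ, IsOpen U ∧ uIcc (f^[j] x) (f^[j] y) ⊆ U ∧
      ContDiffOn ℝ 2 f U)
    (hne : ∀ j < k, ∀ t ∈ uIcc (f^[j] x) (f^[j] y), deriv f t ≠ 0) :
    Real.log |iterDeriv f k x| - Real.log |iterDeriv f k y| ≤
      ∑ j ∈ Finset.range k,
        (⨆ t ∈ uIcc (f^[j] x) (f^[j] y), |deriv (deriv f) t|) *
          |f^[j] x - f^[j] y| / |deriv f (f^[j] y)| := by
  have hx0 : ∀ j ∈ Finset.range k, deriv f (f^[j] x) ≠ 0 := fun j hj =>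
    hne j (Finset.mem_range.mp hj) _ left_mem_uIcc
  have hy0 : ∀ j ∈ Finset.range k, deriv f (f^[j] y) ≠ 0 := fun j hj =>
    hne j (Finset.mem_range.mp hj) _ right_mem_uIcc
  have hlx : Real.log |iterDeriv f k x| =
      ∑ j ∈ Finset.range k, Real.log |deriv f (f^[j] x)| := by
    rw [iterDeriv, Real.log_abs, Real.log_prod hx0]
    exact Finset.sum_congr rfl fun j hj => (Real.log_abs _).symm
  have hly : Real.log |iterDeriv f k y| =
      ∑ j ∈ Finset.range k, Real.log |deriv f (f^[j] y)| := by
    rw [iterDeriv, Real.log_abs, Real.log_prod hy0]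
    exact Finset.sum_congr rfl fun j hj => (Real.log_abs _).symm
  rw [hlx, hly, ← Finset.sum_sub_distrib]
  refine Finset.sum_le_sum fun j hj => ?_
  obtain ⟨U, hU, hsub, hcd⟩ := hsm j (Finset.mem_range.mp hj)
  exact auxstep f _ _ U hU hsub hcd (hne j (Finset.mem_range.mp hj))
end
end
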